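/- Fix η > 0 and i.i.d. random variables (Y_j) with E(exp(η Y_1)) < ∞, plus a positive-integer-valued A independent of them satisfying G_A(E(exp(η Y_1))) < ∞. For every bounded measurable σ, the map ξ ↦ E(σ(Z) exp(η Z^ξ)) on [0,1] (where Z = Σ_{j≤A} Y_j, Z^ξ = Σ_{j≤A} Y_j 1_{U_j≤ξ}) equals a power series Σ_{k≥0} h_k(σ) ξ^k whose coefficients are of the form h_k(σ) = E(δ_k σ(Z)) for nonnegative random variables δ_k (independent of ξ and σ) with Σ_k E(δ_k) < ∞; in particular the power series converges uniformly on [0,1]. -/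

import Mathlib

open MeasureTheory ProbabilityTheory Real Filter

lemma aux_split {Ω ι : Type*} [MeasurableSpace Ω] {μ : Measure Ω} [IsProbabilityMeasure μ]
    {f : ι → Ω → ℝ} (hindep : iIndepFun f μ)
    (hfm : ∀ i, Measurable (f i)) (S T : Finset ι) (hST : Disjoint S T)
    {X W : Ω → ℝ}
    (hX : ∃ G : (S → ℝ) → ℝ, Measurable G ∧ X = fun ω => G (fun i => f i ω))
    (hW : ∃ G : (T → ℝ) → ℝ, Measurable G ∧ W = fun ω => G (fun i => f i ω))
    (hXi : Integrable X μ) (hWi : Integrable W μ) :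
    Integrable (fun ω => X ω * W ω) μ ∧
      ∫ ω, X ω * W ω ∂μ = (∫ ω, X ω ∂μ) * ∫ ω, W ω ∂μ := by
  obtain ⟨G, hGm, hGX⟩ := hX
  obtain ⟨H, hHm, hHW⟩ := hW
  have hInd : IndepFun X W μ := by
    have h := (hindep.indepFun_finset S T hST hfm).comp hGm hHm
    have h1 : X = G ∘ (fun ω (i : S) => f i ω) := hGX
    have h2 : W = H ∘ (fun ω (i : T) => f i ω) := hHW
    rw [h1, h2]; exact h
  exact ⟨hInd.integrable_mul hXi hWi, hInd.integral_mul_eq_mul_integral hXi.aestronglyMeasurable hWi.aestronglyMeasurable⟩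

lemma aux_prod_split {Ω ι : Type*} [MeasurableSpace Ω] {μ : Measure Ω} [IsProbabilityMeasure μ]
    {f : ι → Ω → ℝ} (hindep : iIndepFun f μ)
    (hfm : ∀ i, Measurable (f i)) {c : ℕ → ι} (hc : Function.Injective c)
    (φ : ℕ → ℝ → ℝ) (hφm : ∀ j, Measurable (φ j))
    (hφi : ∀ j, Integrable (fun ω => φ j (f (c j) ω)) μ) (S : Finset ℕ) :
    Integrable (fun ω => ∏ j ∈ S, φ j (f (c j) ω)) μ ∧
      ∫ ω, ∏ j ∈ S, φ j (f (c j) ω) ∂μ = ∏ j ∈ S, ∫ ω, φ j (f (c j) ω) ∂μ := by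
  classical
  induction S using Finset.cons_induction with
  | empty => constructor <;> simp
  | cons a S ha ih =>
    have hdisj : Disjoint ({c a} : Finset ι) (S.image c) := by
      simp only [Finset.disjoint_singleton_left, Finset.mem_image, not_exists]
      rintro b ⟨hb, hba⟩
      exact ha ((hc hba) ▸ hb)
    have key := aux_split hindep hfm {c a} (S.image c) hdisj
      (X := fun ω => φ a (f (c a) ω)) (W := fun ω => ∏ j ∈ S, φ j (f (c j) ω))
      ⟨fun v => φ a (v ⟨c a, Finset.mem_singleton_self _⟩),
        (hφm a).comp (measurable_pi_apply _), rfl⟩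
      ⟨fun v => ∏ j ∈ S.attach, φ j (v ⟨c j, Finset.mem_image_of_mem c j.2⟩),
        Finset.measurable_prod _ fun j _ => (hφm j).comp (measurable_pi_apply _),
        by funext ω; exact (Finset.prod_attach S fun j => φ j (f (c j) ω)).symm⟩
      (hφi a) ih.1
    constructor
    · simpa only [Finset.prod_cons] using key.1
    · simp only [Finset.prod_cons]
      rw [key.2, ih.2]

/-- Power series representation of `ξ ↦ E(σ(Z) exp(η Z^ξ))` with coefficients
`h_k(σ) = E(δ_k σ(Z))`, `δ_k ≥ 0`, `Σ_k E(δ_k) < ∞`, uniformly convergent on `[0,1]`. -/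
theorem stmt5 {Ω : Type*} [MeasurableSpace Ω] (μ : Measure Ω) [IsProbabilityMeasure μ]
    (A : Ω → ℕ) (Y U : ℕ → Ω → ℝ) (η : ℝ) (hη : 0 < η)
    (hAm : Measurable A) (hA1 : ∀ ω, 1 ≤ A ω)
    (hYm : ∀ j, Measurable (Y j)) (hUm : ∀ j, Measurable (U j))
    (hYpos : ∀ j ω, 0 ≤ Y j ω)
    (hYid : ∀ j j' : ℕ, Measure.map (Y j) μ = Measure.map (Y j') μ)
    (hUunif : ∀ j, Measure.map (U j) μ = (volume.restrict (Set.Icc (0:ℝ) 1)))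
    (hindep : iIndepFun
      (Sum.elim (fun (_ : Unit) (ω : Ω) => (A ω : ℝ)) (Sum.elim Y U)) μ)
    (hint : ∀ j, Integrable (fun ω => Real.exp (η * Y j ω)) μ)
    (hG : Summable (fun k : ℕ => (μ {ω | A ω = k}).toReal *
      (∫ ω, Real.exp (η * Y 0 ω) ∂μ) ^ k)) :
    ∃ δ : ℕ → Ω → ℝ,
      (∀ k ω, 0 ≤ δ k ω) ∧ (∀ k, Integrable (δ k) μ) ∧
      Summable (fun k => ∫ ω, δ k ω ∂μ) ∧
      ∀ σ : ℝ → ℝ, Measurable σ → (∃ C, ∀ x, |σ x| ≤ C) →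
        (∀ ξ ∈ Set.Icc (0:ℝ) 1,
          ∫ ω, σ (∑ j ∈ Finset.range (A ω), Y j ω) *
              Real.exp (η * ∑ j ∈ Finset.range (A ω),
                Y j ω * (if U j ω ≤ ξ then (1:ℝ) else 0)) ∂μ =
            ∑' k : ℕ, (∫ ω, δ k ω * σ (∑ j ∈ Finset.range (A ω), Y j ω) ∂μ) * ξ ^ k) ∧
        TendstoUniformlyOn
          (fun n ξ => ∑ k ∈ Finset.range n,
            (∫ ω, δ k ω * σ (∑ j ∈ Finset.range (A ω), Y j ω) ∂μ) * ξ ^ k)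
          (fun ξ => ∫ ω, σ (∑ j ∈ Finset.range (A ω), Y j ω) *
              Real.exp (η * ∑ j ∈ Finset.range (A ω),
                Y j ω * (if U j ω ≤ ξ then (1:ℝ) else 0)) ∂μ)
          Filter.atTop (Set.Icc (0:ℝ) 1) := by
  classical
  set f : (Unit ⊕ ℕ ⊕ ℕ) → Ω → ℝ := Sum.elim (fun _ ω => (A ω : ℝ)) (Sum.elim Y U) with hfdef
  have hfm : ∀ i, Measurable (f i) := by
    rintro (⟨⟩ | j | j)
    · exact measurable_from_top.comp hAm
    · exact hYm j
    · exact hUm j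
  have toYinj : Function.Injective (fun j : ℕ => (Sum.inr (Sum.inl j) : Unit ⊕ ℕ ⊕ ℕ)) := by
    intro a b h; simpa using h
  have toUinj : Function.Injective (fun j : ℕ => (Sum.inr (Sum.inr j) : Unit ⊕ ℕ ⊕ ℕ)) := by
    intro a b h; simpa using h
  set m : ℝ := ∫ ω, Real.exp (η * Y 0 ω) ∂μ with hmdef
  have hexp1 : ∀ j ω, 1 ≤ Real.exp (η * Y j ω) := fun j ω =>
    Real.one_le_exp (mul_nonneg hη.le (hYpos j ω))
  have hm1 : 1 ≤ m := by
    calc (1:ℝ) = ∫ _ω, (1:ℝ) ∂μ := by simp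
    _ ≤ m := integral_mono (integrable_const 1) (hint 0) fun ω => hexp1 0 ω
  have hm0 : 0 ≤ m - 1 := by linarith
  have hmv : ∀ j, ∫ ω, Real.exp (η * Y j ω) ∂μ = m := by
    intro j
    have hcont : AEStronglyMeasurable (fun x : ℝ => Real.exp (η * x)) (Measure.map (Y j) μ) :=
      (Real.continuous_exp.comp (continuous_const.mul continuous_id)).aestronglyMeasurable
    have h1 : ∫ ω, Real.exp (η * Y j ω) ∂μ = ∫ x, Real.exp (η * x) ∂(Measure.map (Y j) μ) :=
      (integral_map (hYm j).aemeasurable hcont).symm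
    have hcont0 : AEStronglyMeasurable (fun x : ℝ => Real.exp (η * x)) (Measure.map (Y 0) μ) :=
      (Real.continuous_exp.comp (continuous_const.mul continuous_id)).aestronglyMeasurable
    rw [h1, hYid j 0, integral_map (hYm 0).aemeasurable hcont0]
  -- products of exp(η Y j)
  have hYprod : ∀ S : Finset ℕ,
      Integrable (fun ω => ∏ j ∈ S, Real.exp (η * Y j ω)) μ ∧
      ∫ ω, ∏ j ∈ S, Real.exp (η * Y j ω) ∂μ = m ^ S.card := by
    intro S
    have h := aux_prod_split hindep hfm toYinj (fun _ x => Real.exp (η * x))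
      (fun _ => (Real.continuous_exp.comp (continuous_const.mul continuous_id)).measurable)
      (fun j => hint j) S
    simp only [hfdef, Sum.elim_inr, Sum.elim_inl] at h
    refine ⟨h.1, ?_⟩
    rw [h.2]
    rw [Finset.prod_congr rfl fun j _ => hmv j, Finset.prod_const]
  have hEprod : ∀ S : Finset ℕ,
      Integrable (fun ω => ∏ j ∈ S, (Real.exp (η * Y j ω) - 1)) μ ∧
      ∫ ω, ∏ j ∈ S, (Real.exp (η * Y j ω) - 1) ∂μ = (m - 1) ^ S.card := by
    intro S
    have h := aux_prod_split hindep hfm toYinj (fun _ x => Real.exp (η * x) - 1)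
      (fun _ => ((Real.continuous_exp.comp (continuous_const.mul continuous_id)).sub
        continuous_const).measurable)
      (fun j => (hint j).sub (integrable_const 1)) S
    simp only [hfdef, Sum.elim_inr, Sum.elim_inl] at h
    refine ⟨h.1, ?_⟩
    rw [h.2]
    have : ∀ j, ∫ ω, (Real.exp (η * Y j ω) - 1) ∂μ = m - 1 := by
      intro j
      rw [integral_sub (hint j) (integrable_const 1), hmv j]
      simp
    rw [Finset.prod_congr rfl fun j _ => this j, Finset.prod_const]
  -- products of indicators of U j ≤ ξ
  have hUone : ∀ ξ, ξ ∈ Set.Icc (0:ℝ) 1 → ∀ j,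
      ∫ ω, (if U j ω ≤ ξ then (1:ℝ) else 0) ∂μ = ξ := by
    intro ξ hξ j
    have hind : (fun x : ℝ => if x ≤ ξ then (1:ℝ) else 0) = (Set.Iic ξ).indicator 1 := by
      funext x; by_cases h : x ≤ ξ <;> simp [h, Set.indicator]
    have hmeas : Measurable (fun x : ℝ => if x ≤ ξ then (1:ℝ) else 0) := by
      rw [hind]; exact measurable_one.indicator measurableSet_Iic
    calc ∫ ω, (if U j ω ≤ ξ then (1:ℝ) else 0) ∂μ
        = ∫ x, (if x ≤ ξ then (1:ℝ) else 0) ∂(Measure.map (U j) μ) :=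
          (integral_map (hUm j).aemeasurable hmeas.aestronglyMeasurable).symm
      _ = ∫ x, (Set.Iic ξ).indicator 1 x ∂(volume.restrict (Set.Icc (0:ℝ) 1)) := by
          rw [hUunif j, hind]
      _ = ((volume.restrict (Set.Icc (0:ℝ) 1)) (Set.Iic ξ)).toReal :=
          integral_indicator_one measurableSet_Iic
      _ = (volume (Set.Iic ξ ∩ Set.Icc (0:ℝ) 1)).toReal := by
          rw [Measure.restrict_apply measurableSet_Iic]
      _ = ξ := by
          have : Set.Iic ξ ∩ Set.Icc (0:ℝ) 1 = Set.Icc 0 ξ := by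
            ext x
            simp only [Set.mem_inter_iff, Set.mem_Iic, Set.mem_Icc]
            constructor
            · rintro ⟨h1, h2, h3⟩; exact ⟨h2, h1⟩
            · rintro ⟨h1, h2⟩; exact ⟨h2, h1, h2.trans hξ.2⟩
          rw [this, Real.volume_Icc, ENNReal.toReal_ofReal (by linarith [hξ.1]), sub_zero]
  have hUprod : ∀ ξ, ξ ∈ Set.Icc (0:ℝ) 1 → ∀ T : Finset ℕ,
      Integrable (fun ω => ∏ j ∈ T, (if U j ω ≤ ξ then (1:ℝ) else 0)) μ ∧
      ∫ ω, ∏ j ∈ T, (if U j ω ≤ ξ then (1:ℝ) else 0) ∂μ = ξ ^ T.card := by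
    intro ξ hξ T
    have hmeas : ∀ j : ℕ, Measurable (fun x : ℝ => if x ≤ ξ then (1:ℝ) else 0) := by
      intro j
      have : (fun x : ℝ => if x ≤ ξ then (1:ℝ) else 0) = (Set.Iic ξ).indicator 1 := by
        funext x; by_cases h : x ≤ ξ <;> simp [h, Set.indicator]
      rw [this]; exact measurable_one.indicator measurableSet_Iic
    have hinteg : ∀ j : ℕ, Integrable (fun ω => if U j ω ≤ ξ then (1:ℝ) else 0) μ := by
      intro j
      refine Integrable.mono' (integrable_const 1)
        (((hmeas j).comp (hUm j)).aestronglyMeasurable) (ae_of_all _ fun ω => ?_)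
      by_cases h : U j ω ≤ ξ <;> simp [h]
    have h := aux_prod_split hindep hfm toUinj (fun _ x => if x ≤ ξ then (1:ℝ) else 0)
      hmeas hinteg T
    simp only [hfdef, Sum.elim_inr, Sum.elim_inl] at h
    refine ⟨h.1, ?_⟩
    rw [h.2, Finset.prod_congr rfl fun j _ => hUone ξ hξ j, Finset.prod_const]
  -- composition measurability helper
  have hcomp : ∀ (g : ℕ → Ω → ℝ), (∀ n, Measurable (g n)) → Measurable (fun ω => g (A ω) ω) := by
    intro g hg
    have h1 : (fun ω => g (A ω) ω) = (fun p : Ω × ℕ => g p.2 p.1) ∘ (fun ω => (ω, A ω)) := rfl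
    rw [h1]
    exact (measurable_from_prod_countable_left fun n => hg n).comp (measurable_id.prodMk hAm)
  -- the indicator of {A = n}
  set χ : ℕ → Ω → ℝ := fun n ω => if A ω = n then 1 else 0 with hχdef
  have hχm : ∀ n, Measurable (χ n) := fun n =>
    Measurable.ite (hAm (measurableSet_singleton n)) measurable_const measurable_const
  have hχ0 : ∀ n ω, 0 ≤ χ n ω := by
    intro n ω; by_cases h : A ω = n <;> simp [hχdef, h]
  have hχ1 : ∀ n ω, χ n ω ≤ 1 := by
    intro n ω; by_cases h : A ω = n <;> simp [hχdef, h]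
  have hχi : ∀ n, Integrable (χ n) μ := by
    intro n
    refine Integrable.mono' (integrable_const 1) (hχm n).aestronglyMeasurable
      (ae_of_all _ fun ω => ?_)
    rw [Real.norm_eq_abs, abs_of_nonneg (hχ0 n ω)]; exact hχ1 n ω
  have hχval : ∀ n, ∫ ω, χ n ω ∂μ = (μ {ω | A ω = n}).toReal := by
    intro n
    have h1 : χ n = Set.indicator {ω | A ω = n} (fun _ => (1:ℝ)) := by
      funext ω; by_cases h : A ω = n <;> simp [hχdef, h, Set.indicator]
    rw [h1]
    exact integral_indicator_one (hAm (measurableSet_singleton n))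
  -- splitting A-indicator from Y-products
  have mixA : ∀ (n : ℕ) (S : Finset ℕ) (φ : ℕ → ℝ → ℝ), (∀ j, Measurable (φ j)) →
      (∀ j, Integrable (fun ω => φ j (Y j ω)) μ) →
      Integrable (fun ω => χ n ω * ∏ j ∈ S, φ j (Y j ω)) μ ∧
      ∫ ω, χ n ω * ∏ j ∈ S, φ j (Y j ω) ∂μ
        = (μ {ω | A ω = n}).toReal * ∏ j ∈ S, ∫ ω, φ j (Y j ω) ∂μ := by
    intro n S φ hφm hφi
    have hprod := aux_prod_split hindep hfm toYinj φ hφm (by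
      intro j
      simpa only [hfdef, Sum.elim_inr, Sum.elim_inl] using hφi j) S
    simp only [hfdef, Sum.elim_inr, Sum.elim_inl] at hprod
    have hdisj : Disjoint ({Sum.inl ()} : Finset (Unit ⊕ ℕ ⊕ ℕ))
        (S.image (fun j => Sum.inr (Sum.inl j))) := by
      rw [Finset.disjoint_left]
      intro a ha hb
      simp only [Finset.mem_singleton] at ha
      simp only [Finset.mem_image] at hb
      obtain ⟨i, _, rfl⟩ := hb
      simp at ha
    have key := aux_split hindep hfm {Sum.inl ()} _ hdisj
      (X := χ n) (W := fun ω => ∏ j ∈ S, φ j (Y j ω))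
      ⟨fun v => if v ⟨Sum.inl (), Finset.mem_singleton_self _⟩ = (n:ℝ) then 1 else 0,
        Measurable.ite ((measurable_pi_apply _) (measurableSet_singleton _))
          measurable_const measurable_const,
        by funext ω; by_cases h : A ω = n <;> simp [hχdef, hfdef, h, Nat.cast_inj]⟩
      ⟨fun v => ∏ j ∈ S.attach, φ j (v ⟨Sum.inr (Sum.inl j), Finset.mem_image_of_mem _ j.2⟩),
        Finset.measurable_prod _ fun j _ => (hφm j).comp (measurable_pi_apply _),
        by
          funext ω
          simp only [hfdef, Sum.elim_inr, Sum.elim_inl]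
          exact (Finset.prod_attach S fun j => φ j (Y j ω)).symm⟩
      (hχi n) hprod.1
    exact ⟨key.1, by rw [key.2, hχval n, hprod.2]⟩
  -- splitting (A, Y)-functions from U-indicator products
  have mix : ∀ ξ ∈ Set.Icc (0:ℝ) 1, ∀ (n : ℕ) (T : Finset ℕ)
      (G : ℝ × (Fin n → ℝ) → ℝ), Measurable G →
      Integrable (fun ω => G ((A ω : ℝ), fun j : Fin n => Y j ω)) μ →
      Integrable (fun ω => G ((A ω : ℝ), fun j : Fin n => Y j ω) *
        ∏ j ∈ T, (if U j ω ≤ ξ then (1:ℝ) else 0)) μ ∧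
      ∫ ω, G ((A ω : ℝ), fun j : Fin n => Y j ω) *
          ∏ j ∈ T, (if U j ω ≤ ξ then (1:ℝ) else 0) ∂μ
        = (∫ ω, G ((A ω : ℝ), fun j : Fin n => Y j ω) ∂μ) * ξ ^ T.card := by
    intro ξ hξ n T G hGm hGi
    have hdisj : Disjoint
        (insert (Sum.inl ()) ((Finset.range n).image (fun j => Sum.inr (Sum.inl j))))
        (T.image (fun j => (Sum.inr (Sum.inr j) : Unit ⊕ ℕ ⊕ ℕ))) := by
      rw [Finset.disjoint_left]
      intro a ha hb
      simp only [Finset.mem_image] at hb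
      obtain ⟨i, _, rfl⟩ := hb
      simp only [Finset.mem_insert, Finset.mem_image] at ha
      rcases ha with h | ⟨j, _, h⟩ <;> simp at h
    have key := aux_split hindep hfm _ _ hdisj
      (X := fun ω => G ((A ω : ℝ), fun j : Fin n => Y j ω))
      (W := fun ω => ∏ j ∈ T, (if U j ω ≤ ξ then (1:ℝ) else 0))
      ⟨fun v => G (v ⟨Sum.inl (), Finset.mem_insert_self _ _⟩,
         fun j : Fin n => v ⟨Sum.inr (Sum.inl j), Finset.mem_insert_of_mem
           (Finset.mem_image_of_mem _ (Finset.mem_range.mpr j.isLt))⟩),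
        hGm.comp ((measurable_pi_apply _).prodMk
          (measurable_pi_lambda _ fun j => measurable_pi_apply _)),
        by funext ω; simp only [hfdef, Sum.elim_inr, Sum.elim_inl]⟩
      ⟨fun v => ∏ j ∈ T.attach,
          (if v ⟨Sum.inr (Sum.inr j), Finset.mem_image_of_mem _ j.2⟩ ≤ ξ then (1:ℝ) else 0),
        Finset.measurable_prod _ fun j _ =>
          Measurable.ite ((measurable_pi_apply _) measurableSet_Iic)
            measurable_const measurable_const,
        by
          funext ω
          simp only [hfdef, Sum.elim_inr, Sum.elim_inl]
          exact (Finset.prod_attach T fun j => if U j ω ≤ ξ then (1:ℝ) else 0).symm⟩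
      hGi (hUprod ξ hξ T).1
    exact ⟨key.1, by rw [key.2, (hUprod ξ hξ T).2]⟩
  -- the coefficient random variables δ
  set δ : ℕ → Ω → ℝ := fun k ω =>
    ∑ S ∈ (Finset.range (A ω)).powersetCard k, ∏ j ∈ S, (Real.exp (η * Y j ω) - 1) with hδdef
  have he0 : ∀ j ω, 0 ≤ Real.exp (η * Y j ω) - 1 := fun j ω => by linarith [hexp1 j ω]
  have hδ0 : ∀ k ω, 0 ≤ δ k ω := fun k ω =>
    Finset.sum_nonneg fun S _ => Finset.prod_nonneg fun j _ => he0 j ω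
  have hδm : ∀ k, Measurable (δ k) := by
    intro k
    exact hcomp
      (fun n ω => ∑ S ∈ (Finset.range n).powersetCard k, ∏ j ∈ S, (Real.exp (η * Y j ω) - 1))
      (fun n => Finset.measurable_sum _ fun S _ => Finset.measurable_prod _ fun j _ =>
        (Real.measurable_exp.comp ((hYm j).const_mul η)).sub measurable_const)
  set EA : Ω → ℝ := fun ω => ∏ j ∈ Finset.range (A ω), Real.exp (η * Y j ω) with hEAdef
  have hEAm : Measurable EA := hcomp _ (fun n => Finset.measurable_prod _ fun j _ =>
    Real.measurable_exp.comp ((hYm j).const_mul η))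
  have hEA0 : ∀ ω, 0 ≤ EA ω := fun ω => Finset.prod_nonneg fun j _ => (Real.exp_pos _).le
  have hψ : ∀ n : ℕ,
      Integrable (fun ω => χ n ω * ∏ j ∈ Finset.range n, Real.exp (η * Y j ω)) μ ∧
      ∫ ω, χ n ω * ∏ j ∈ Finset.range n, Real.exp (η * Y j ω) ∂μ
        = (μ {ω | A ω = n}).toReal * m ^ n := by
    intro n
    have h := mixA n (Finset.range n) (fun _ x => Real.exp (η * x))
      (fun _ => Real.measurable_exp.comp (measurable_const.mul measurable_id)) hint
    refine ⟨h.1, ?_⟩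
    rw [h.2, Finset.prod_congr rfl fun j _ => hmv j, Finset.prod_const, Finset.card_range]
  have hψ0 : ∀ n ω, 0 ≤ χ n ω * ∏ j ∈ Finset.range n, Real.exp (η * Y j ω) := fun n ω =>
    mul_nonneg (hχ0 n ω) (Finset.prod_nonneg fun j _ => (Real.exp_pos _).le)
  have hEAint : Integrable EA μ := by
    refine ⟨hEAm.aestronglyMeasurable, ?_⟩
    have hpt : ∀ ω, (‖EA ω‖₊ : ENNReal) =
        ∑' n, ENNReal.ofReal (χ n ω * ∏ j ∈ Finset.range n, Real.exp (η * Y j ω)) := by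
      intro ω
      rw [tsum_eq_single (A ω) (fun n hn => by simp [hχdef, Ne.symm hn])]
      have h2 : χ (A ω) ω * ∏ j ∈ Finset.range (A ω), Real.exp (η * Y j ω) = EA ω := by
        simp [hχdef, hEAdef]
      rw [h2]; exact Real.enorm_of_nonneg (hEA0 ω)
    rw [HasFiniteIntegral]
    calc ∫⁻ ω, ‖EA ω‖₊ ∂μ
        = ∫⁻ ω, ∑' n, ENNReal.ofReal (χ n ω * ∏ j ∈ Finset.range n, Real.exp (η * Y j ω)) ∂μ :=
          lintegral_congr hpt
      _ = ∑' n, ∫⁻ ω, ENNReal.ofReal (χ n ω * ∏ j ∈ Finset.range n, Real.exp (η * Y j ω)) ∂μ :=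
          lintegral_tsum (fun n => (((hχm n).mul (Finset.measurable_prod _ fun j _ =>
            Real.measurable_exp.comp ((hYm j).const_mul η))).ennreal_ofReal).aemeasurable)
      _ = ∑' n, ENNReal.ofReal ((μ {ω | A ω = n}).toReal * m ^ n) := by
          congr 1; funext n
          rw [← ofReal_integral_eq_lintegral_ofReal (hψ n).1 (ae_of_all _ fun ω => hψ0 n ω),
            (hψ n).2]
      _ < ⊤ := by
          rw [← ENNReal.ofReal_tsum_of_nonneg (fun n => mul_nonneg ENNReal.toReal_nonneg
            (pow_nonneg (by linarith) n)) hG]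
          exact ENNReal.ofReal_lt_top
  have hδsum_pt : ∀ ω, ∑ k ∈ Finset.range (A ω + 1), δ k ω = EA ω := by
    intro ω
    have h1 : ∑ k ∈ Finset.range (A ω + 1),
        ∑ S ∈ (Finset.range (A ω)).powersetCard k, ∏ j ∈ S, (Real.exp (η * Y j ω) - 1)
        = ∑ S ∈ (Finset.range (A ω)).powerset, ∏ j ∈ S, (Real.exp (η * Y j ω) - 1) := by
      rw [Finset.sum_powerset, Finset.card_range]
    have h3 := Finset.prod_add (fun j => Real.exp (η * Y j ω) - 1) (fun _ => (1:ℝ))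
      (Finset.range (A ω))
    simp only [Finset.prod_const_one, mul_one, sub_add_cancel] at h3
    calc ∑ k ∈ Finset.range (A ω + 1), δ k ω
        = ∑ S ∈ (Finset.range (A ω)).powerset, ∏ j ∈ S, (Real.exp (η * Y j ω) - 1) := h1
      _ = EA ω := by rw [← h3]
  have hδvanish : ∀ k ω, A ω < k → δ k ω = 0 := by
    intro k ω h
    rw [hδdef]
    simp only []
    rw [Finset.powersetCard_eq_empty.mpr (by simpa using h)]
    simp
  have hδle : ∀ K ω, ∑ k ∈ Finset.range K, δ k ω ≤ EA ω := by
    intro K ω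
    rcases le_or_gt K (A ω + 1) with h | h
    · calc ∑ k ∈ Finset.range K, δ k ω ≤ ∑ k ∈ Finset.range (A ω + 1), δ k ω :=
          Finset.sum_le_sum_of_subset_of_nonneg (Finset.range_subset_range.mpr h)
            (fun k _ _ => hδ0 k ω)
        _ = EA ω := hδsum_pt ω
    · have heq : ∑ k ∈ Finset.range K, δ k ω = ∑ k ∈ Finset.range (A ω + 1), δ k ω := by
        refine (Finset.sum_subset (Finset.range_subset_range.mpr h.le) ?_).symm
        intro k _ hk2
        exact hδvanish k ω (by simp only [Finset.mem_range] at hk2; omega)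
      rw [heq, hδsum_pt ω]
  have hδint : ∀ k, Integrable (δ k) μ := by
    intro k
    refine Integrable.mono' hEAint (hδm k).aestronglyMeasurable (ae_of_all _ fun ω => ?_)
    rw [Real.norm_eq_abs, abs_of_nonneg (hδ0 k ω)]
    calc δ k ω ≤ ∑ k' ∈ Finset.range (k+1), δ k' ω :=
        Finset.single_le_sum (fun k' _ => hδ0 k' ω) (Finset.self_mem_range_succ k)
      _ ≤ EA ω := hδle (k+1) ω
  have hδsummable : Summable (fun k => ∫ ω, δ k ω ∂μ) := by
    refine summable_of_sum_range_le (c := ∫ ω, EA ω ∂μ)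
      (fun k => integral_nonneg (fun ω => hδ0 k ω)) (fun K => ?_)
    rw [← integral_finset_sum _ (fun k _ => hδint k)]
    exact integral_mono (integrable_finset_sum _ fun k _ => hδint k) hEAint
      (fun ω => hδle K ω)
  refine ⟨δ, hδ0, hδint, hδsummable, ?_⟩
  intro σ hσm hσbdd
  obtain ⟨C, hC⟩ := hσbdd
  have hC0 : 0 ≤ C := le_trans (abs_nonneg _) (hC 0)
  have heval : ∀ j, ∫ ω, (Real.exp (η * Y j ω) - 1) ∂μ = m - 1 := by
    intro j
    rw [integral_sub (hint j) (integrable_const 1), hmv j]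
    simp
  have hZm : Measurable (fun ω => ∑ j ∈ Finset.range (A ω), Y j ω) :=
    hcomp _ (fun n => Finset.measurable_sum _ fun j _ => hYm j)
  -- the elementary pieces Φ n S
  set Φ : ℕ → Finset ℕ → Ω → ℝ := fun n S ω =>
    (χ n ω * σ (∑ j ∈ Finset.range n, Y j ω)) * ∏ j ∈ S, (Real.exp (η * Y j ω) - 1) with hΦdef
  have hbddfac : ∀ n, ∃ C', ∀ ω, ‖χ n ω * σ (∑ j ∈ Finset.range n, Y j ω)‖ ≤ C' := by
    intro n
    refine ⟨C, fun ω => ?_⟩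
    rw [Real.norm_eq_abs, abs_mul, abs_of_nonneg (hχ0 n ω)]
    have h1 : χ n ω * |σ (∑ j ∈ Finset.range n, Y j ω)| ≤ 1 * C :=
      mul_le_mul (hχ1 n ω) (hC _) (abs_nonneg _) zero_le_one
    simpa using h1
  have hfacm : ∀ n, Measurable (fun ω => χ n ω * σ (∑ j ∈ Finset.range n, Y j ω)) :=
    fun n => (hχm n).mul (hσm.comp (Finset.measurable_sum _ fun j _ => hYm j))
  have hΦint : ∀ n S, Integrable (Φ n S) μ := fun n S => by
    obtain ⟨C', hC'⟩ := hbddfac n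
    exact Integrable.bdd_mul (hEprod S).1 (hfacm n).aestronglyMeasurable (ae_of_all _ hC')
  have hχprodE : ∀ n (S : Finset ℕ),
      Integrable (fun ω => χ n ω * ∏ j ∈ S, (Real.exp (η * Y j ω) - 1)) μ ∧
      ∫ ω, χ n ω * ∏ j ∈ S, (Real.exp (η * Y j ω) - 1) ∂μ
        = (μ {ω | A ω = n}).toReal * (m - 1) ^ S.card := by
    intro n S
    have h := mixA n S (fun _ x => Real.exp (η * x) - 1)
      (fun _ => (Real.measurable_exp.comp (measurable_const.mul measurable_id)).sub
        measurable_const)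
      (fun j => (hint j).sub (integrable_const 1))
    refine ⟨h.1, ?_⟩
    rw [h.2, Finset.prod_congr rfl fun j _ => heval j, Finset.prod_const]
  have hΦabs : ∀ n S ω, |Φ n S ω| ≤
      C * (χ n ω * ∏ j ∈ S, (Real.exp (η * Y j ω) - 1)) := by
    intro n S ω
    have hprodnn : 0 ≤ ∏ j ∈ S, (Real.exp (η * Y j ω) - 1) :=
      Finset.prod_nonneg fun j _ => he0 j ω
    rw [hΦdef]
    calc |(χ n ω * σ (∑ j ∈ Finset.range n, Y j ω)) * ∏ j ∈ S, (Real.exp (η * Y j ω) - 1)|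
        = χ n ω * |σ (∑ j ∈ Finset.range n, Y j ω)| * ∏ j ∈ S, (Real.exp (η * Y j ω) - 1) := by
          rw [abs_mul, abs_mul, abs_of_nonneg (hχ0 n ω), abs_of_nonneg hprodnn]
      _ ≤ χ n ω * C * ∏ j ∈ S, (Real.exp (η * Y j ω) - 1) := by
          have := mul_le_mul_of_nonneg_left (hC (∑ j ∈ Finset.range n, Y j ω)) (hχ0 n ω)
          exact mul_le_mul_of_nonneg_right this hprodnn
      _ = C * (χ n ω * ∏ j ∈ S, (Real.exp (η * Y j ω) - 1)) := by ring
  have hΦnorm : ∀ n S, ∫ ω, |Φ n S ω| ∂μ ≤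
      C * ((μ {ω | A ω = n}).toReal * (m - 1) ^ S.card) := by
    intro n S
    calc ∫ ω, |Φ n S ω| ∂μ
        ≤ ∫ ω, C * (χ n ω * ∏ j ∈ S, (Real.exp (η * Y j ω) - 1)) ∂μ :=
          integral_mono (hΦint n S).abs ((hχprodE n S).1.const_mul C) (hΦabs n S)
      _ = C * ((μ {ω | A ω = n}).toReal * (m - 1) ^ S.card) := by
          rw [integral_const_mul, (hχprodE n S).2]
  -- Θ n k : sum of Φ over subsets of cardinality k
  set Θ : ℕ → ℕ → Ω → ℝ := fun n k ω => ∑ S ∈ (Finset.range n).powersetCard k, Φ n S ω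
    with hΘdef
  have hΘint : ∀ n k, Integrable (Θ n k) μ := fun n k =>
    integrable_finset_sum _ fun S _ => hΦint n S
  have hΘabs : ∀ n k, ∫ ω, |Θ n k ω| ∂μ ≤
      C * ((μ {ω | A ω = n}).toReal * ((n.choose k : ℝ) * (m - 1) ^ k)) := by
    intro n k
    calc ∫ ω, |Θ n k ω| ∂μ
        ≤ ∫ ω, ∑ S ∈ (Finset.range n).powersetCard k, |Φ n S ω| ∂μ :=
          integral_mono (hΘint n k).abs
            (integrable_finset_sum _ fun S _ => (hΦint n S).abs)
            (fun ω => Finset.abs_sum_le_sum_abs _ _)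
      _ = ∑ S ∈ (Finset.range n).powersetCard k, ∫ ω, |Φ n S ω| ∂μ :=
          integral_finset_sum _ fun S _ => (hΦint n S).abs
      _ ≤ ∑ S ∈ (Finset.range n).powersetCard k,
            C * ((μ {ω | A ω = n}).toReal * (m - 1) ^ k) := by
          refine Finset.sum_le_sum fun S hS => ?_
          have hcard : S.card = k := (Finset.mem_powersetCard.mp hS).2
          simpa [hcard] using hΦnorm n S
      _ = C * ((μ {ω | A ω = n}).toReal * ((n.choose k : ℝ) * (m - 1) ^ k)) := by
          rw [Finset.sum_const, Finset.card_powersetCard, Finset.card_range, nsmul_eq_mul]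
          ring
  have hchoose : ∀ n k : ℕ, ((n.choose k : ℝ)) * (m - 1) ^ k ≤ m ^ n := by
    intro n k
    rcases le_or_gt k n with h | h
    · have hsum := add_pow (m - 1) 1 n
      calc ((n.choose k : ℝ)) * (m - 1) ^ k
          = (m - 1) ^ k * 1 ^ (n - k) * (n.choose k : ℝ) := by rw [one_pow]; ring
        _ ≤ ∑ i ∈ Finset.range (n + 1), (m - 1) ^ i * 1 ^ (n - i) * (n.choose i : ℝ) :=
            Finset.single_le_sum (f := fun i => (m - 1) ^ i * 1 ^ (n - i) * (n.choose i : ℝ))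
              (fun i _ => by positivity)
              (Finset.mem_range.mpr (Nat.lt_succ_of_le h))
        _ = ((m - 1) + 1) ^ n := hsum.symm
        _ = m ^ n := by norm_num
    · simp only [Nat.choose_eq_zero_of_lt h, Nat.cast_zero, zero_mul]
      positivity
  have hPn0 : ∀ n, (0:ℝ) ≤ (μ {ω | A ω = n}).toReal := fun n => ENNReal.toReal_nonneg
  have hBle : ∀ n k, C * ((μ {ω | A ω = n}).toReal * ((n.choose k : ℝ) * (m - 1) ^ k))
      ≤ C * ((μ {ω | A ω = n}).toReal * m ^ n) := fun n k => by
    have := mul_le_mul_of_nonneg_left (hchoose n k) (hPn0 n)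
    exact mul_le_mul_of_nonneg_left this hC0
  have hPsum : Summable (fun n => C * ((μ {ω | A ω = n}).toReal * m ^ n)) := hG.mul_left C
  have hΘsum : ∀ k, Summable (fun n => ∫ ω, |Θ n k ω| ∂μ) := by
    intro k
    refine Summable.of_nonneg_of_le (fun n => integral_nonneg fun ω => abs_nonneg _)
      (fun n => le_trans (hΘabs n k) (hBle n k)) hPsum
  -- Step A : coefficient identity
  have hck : ∀ k, ∫ ω, δ k ω * σ (∑ j ∈ Finset.range (A ω), Y j ω) ∂μ
      = ∑' n, ∫ ω, Θ n k ω ∂μ := by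
    intro k
    have hpt : ∀ ω, δ k ω * σ (∑ j ∈ Finset.range (A ω), Y j ω) = ∑' n, Θ n k ω := by
      intro ω
      rw [tsum_eq_single (A ω) (fun n hn => ?_)]
      · rw [hΘdef, hδdef]
        dsimp only
        rw [Finset.sum_mul]
        refine Finset.sum_congr rfl fun S hS => ?_
        rw [hΦdef]
        dsimp only
        simp [hχdef]
        ring
      · rw [hΘdef]
        dsimp only
        refine Finset.sum_eq_zero fun S _ => ?_
        rw [hΦdef]
        dsimp only
        simp [hχdef, Ne.symm hn]
    have h0 : ∫ ω, δ k ω * σ (∑ j ∈ Finset.range (A ω), Y j ω) ∂μ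
        = ∫ ω, ∑' n, Θ n k ω ∂μ :=
      congrArg (fun g => ∫ ω, g ω ∂μ) (funext hpt)
    rw [h0, ← integral_tsum_of_summable_integral_norm (fun n => hΘint n k)
      (by simpa [Real.norm_eq_abs] using hΘsum k)]
  -- Step B : the main identity, for fixed ξ
  have key : ∀ ξ ∈ Set.Icc (0:ℝ) 1,
      ∫ ω, σ (∑ j ∈ Finset.range (A ω), Y j ω) *
          Real.exp (η * ∑ j ∈ Finset.range (A ω),
            Y j ω * (if U j ω ≤ ξ then (1:ℝ) else 0)) ∂μ =
        ∑' k : ℕ, (∫ ω, δ k ω * σ (∑ j ∈ Finset.range (A ω), Y j ω) ∂μ) * ξ ^ k := by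
    intro ξ hξ
    have hind01 : ∀ j ω, 0 ≤ (if U j ω ≤ ξ then (1:ℝ) else 0) ∧
        (if U j ω ≤ ξ then (1:ℝ) else 0) ≤ 1 := by
      intro j ω; by_cases h : U j ω ≤ ξ <;> simp [h]
    -- factorization of Φ n S through (A, Y-coordinates) for S ⊆ range n
    have hmixΦ : ∀ n, ∀ S : Finset ℕ, S ⊆ Finset.range n →
        Integrable (fun ω => Φ n S ω * ∏ j ∈ S, (if U j ω ≤ ξ then (1:ℝ) else 0)) μ ∧
        ∫ ω, Φ n S ω * ∏ j ∈ S, (if U j ω ≤ ξ then (1:ℝ) else 0) ∂μ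
          = (∫ ω, Φ n S ω ∂μ) * ξ ^ S.card := by
      intro n S hS
      set G : ℝ × (Fin n → ℝ) → ℝ := fun p =>
        ((if p.1 = (n:ℝ) then (1:ℝ) else 0) * σ (∑ j : Fin n, p.2 j)) *
          ∏ j ∈ S.attach, (Real.exp (η * p.2 ⟨(j:ℕ), Finset.mem_range.mp (hS j.2)⟩) - 1)
        with hGdef
      have hGm : Measurable G := by
        refine Measurable.mul (Measurable.mul ?_ ?_) ?_
        · exact Measurable.ite (measurable_fst (measurableSet_singleton _))
            measurable_const measurable_const
        · exact hσm.comp (Finset.measurable_sum _ fun j _ =>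
            (measurable_pi_apply j).comp measurable_snd)
        · exact Finset.measurable_prod _ fun j _ =>
            (Real.measurable_exp.comp (by fun_prop)).sub
              measurable_const
      have hGeq : (fun ω => G ((A ω : ℝ), fun j : Fin n => Y (j:ℕ) ω)) = Φ n S := by
        funext ω
        rw [hGdef, hΦdef]
        dsimp only
        have h1 : (if (A ω : ℝ) = (n:ℝ) then (1:ℝ) else 0) = χ n ω := by
          simp [hχdef, Nat.cast_inj]
        have h2 : ∑ j : Fin n, Y (j:ℕ) ω = ∑ j ∈ Finset.range n, Y j ω :=
          Fin.sum_univ_eq_sum_range (fun j => Y j ω) n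
        have h3 : ∏ j ∈ S.attach, (Real.exp (η * Y ((j:ℕ)) ω) - 1)
            = ∏ j ∈ S, (Real.exp (η * Y j ω) - 1) :=
          Finset.prod_attach S fun j => Real.exp (η * Y j ω) - 1
        rw [h1, h2, h3]
      have hpt : ∀ ω, Φ n S ω = G ((A ω : ℝ), fun j : Fin n => Y ((j:ℕ)) ω) :=
        fun ω => (congrFun hGeq ω).symm
      have h := mix ξ hξ n S G hGm (by rw [hGeq]; exact hΦint n S)
      refine ⟨h.1.congr (ae_of_all _ fun ω => ?_), ?_⟩
      · exact (congrArg (fun t => t * ∏ j ∈ S, (if U j ω ≤ ξ then (1:ℝ) else 0)) (hpt ω)).symm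
      · have hI : (∫ ω, G ((A ω : ℝ), fun j : Fin n => Y ((j:ℕ)) ω) ∂μ)
            = ∫ ω, Φ n S ω ∂μ := congrArg (integral μ) hGeq
        have hI2 : ∫ ω, Φ n S ω * ∏ j ∈ S, (if U j ω ≤ ξ then (1:ℝ) else 0) ∂μ
            = ∫ ω, G ((A ω : ℝ), fun j : Fin n => Y ((j:ℕ)) ω) *
                ∏ j ∈ S, (if U j ω ≤ ξ then (1:ℝ) else 0) ∂μ :=
          congrArg (fun g : Ω → ℝ => ∫ ω, g ω ∂μ) (funext fun ω => by rw [hpt ω])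
        rw [hI2, h.2, hI]
    -- the double-indexed family
    set F2 : ℕ × ℕ → Ω → ℝ := fun p ω =>
      ∑ S ∈ (Finset.range p.2).powersetCard p.1,
        Φ p.2 S ω * ∏ j ∈ S, (if U j ω ≤ ξ then (1:ℝ) else 0) with hF2def
    have hF2int : ∀ p, Integrable (F2 p) μ := fun p =>
      integrable_finset_sum _ fun S hS =>
        (hmixΦ p.2 S (Finset.mem_powersetCard.mp hS).1).1
    have hF2val : ∀ p : ℕ × ℕ, ∫ ω, F2 p ω ∂μ = ξ ^ p.1 * ∫ ω, Θ p.2 p.1 ω ∂μ := by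
      intro p
      rw [hF2def]
      dsimp only
      rw [integral_finset_sum _ (fun S hS =>
        (hmixΦ p.2 S (Finset.mem_powersetCard.mp hS).1).1)]
      rw [hΘdef]
      dsimp only
      rw [integral_finset_sum _ (fun S _ => hΦint _ _), Finset.mul_sum]
      refine Finset.sum_congr rfl fun S hS => ?_
      obtain ⟨hsub, hcard⟩ := Finset.mem_powersetCard.mp hS
      rw [(hmixΦ p.2 S hsub).2, hcard, mul_comm]
    have hF2abs : ∀ p : ℕ × ℕ, ∫ ω, |F2 p ω| ∂μ ≤
        C * ((μ {ω | A ω = p.2}).toReal * ((p.2.choose p.1 : ℝ) * (m - 1) ^ p.1)) := by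
      intro p
      have hptle : ∀ ω, |F2 p ω| ≤ ∑ S ∈ (Finset.range p.2).powersetCard p.1, |Φ p.2 S ω| := by
        intro ω
        refine (Finset.abs_sum_le_sum_abs _ _).trans (Finset.sum_le_sum fun S _ => ?_)
        rw [abs_mul]
        have h1 : |∏ j ∈ S, (if U j ω ≤ ξ then (1:ℝ) else 0)| ≤ 1 := by
          rw [abs_of_nonneg (Finset.prod_nonneg fun j _ => (hind01 j ω).1)]
          exact Finset.prod_le_one (fun j _ => (hind01 j ω).1) (fun j _ => (hind01 j ω).2)
        calc |Φ p.2 S ω| * |∏ j ∈ S, (if U j ω ≤ ξ then (1:ℝ) else 0)|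
            ≤ |Φ p.2 S ω| * 1 := mul_le_mul_of_nonneg_left h1 (abs_nonneg _)
          _ = |Φ p.2 S ω| := mul_one _
      calc ∫ ω, |F2 p ω| ∂μ
          ≤ ∫ ω, ∑ S ∈ (Finset.range p.2).powersetCard p.1, |Φ p.2 S ω| ∂μ :=
            integral_mono (hF2int p).abs
              (integrable_finset_sum _ fun S _ => (hΦint _ _).abs) hptle
        _ = ∑ S ∈ (Finset.range p.2).powersetCard p.1, ∫ ω, |Φ p.2 S ω| ∂μ :=
            integral_finset_sum _ fun S _ => (hΦint _ _).abs
        _ ≤ ∑ S ∈ (Finset.range p.2).powersetCard p.1,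
              C * ((μ {ω | A ω = p.2}).toReal * (m - 1) ^ p.1) := by
            refine Finset.sum_le_sum fun S hS => ?_
            have hcard : S.card = p.1 := (Finset.mem_powersetCard.mp hS).2
            simpa [hcard] using hΦnorm p.2 S
        _ = C * ((μ {ω | A ω = p.2}).toReal * ((p.2.choose p.1 : ℝ) * (m - 1) ^ p.1)) := by
            rw [Finset.sum_const, Finset.card_powersetCard, Finset.card_range, nsmul_eq_mul]
            ring
    -- summability of the bounds over the pairs
    have hBsum : Summable (fun p : ℕ × ℕ =>
        C * ((μ {ω | A ω = p.2}).toReal * ((p.2.choose p.1 : ℝ) * (m - 1) ^ p.1))) := by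
      have h1 : Summable (fun q : ℕ × ℕ =>
          C * ((μ {ω | A ω = q.1}).toReal * ((q.1.choose q.2 : ℝ) * (m - 1) ^ q.2))) := by
        rw [summable_prod_of_nonneg (fun q => by
          have := hPn0 q.1
          positivity)]
        constructor
        · intro n
          apply summable_of_ne_finset_zero (s := Finset.range (n+1))
          intro k hk
          have hnk : n < k := by simpa using hk
          simp [Nat.choose_eq_zero_of_lt hnk]
        · have hval : ∀ n : ℕ, (∑' k, C * ((μ {ω | A ω = n}).toReal *
              ((n.choose k : ℝ) * (m - 1) ^ k)))
              = C * ((μ {ω | A ω = n}).toReal * m ^ n) := by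
            intro n
            rw [tsum_eq_sum (s := Finset.range (n+1)) (fun k hk => by
              have hnk : n < k := by simpa using hk
              simp [Nat.choose_eq_zero_of_lt hnk])]
            have hbin : ∑ k ∈ Finset.range (n+1), ((n.choose k : ℝ)) * (m - 1) ^ k
                = m ^ n := by
              calc ∑ k ∈ Finset.range (n+1), ((n.choose k : ℝ)) * (m - 1) ^ k
                  = ∑ k ∈ Finset.range (n+1), (m - 1) ^ k * 1 ^ (n - k) * (n.choose k : ℝ) :=
                    Finset.sum_congr rfl fun k _ => by rw [one_pow]; ring
                _ = ((m - 1) + 1) ^ n := (add_pow (m - 1) 1 n).symm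
                _ = m ^ n := by norm_num
            calc ∑ k ∈ Finset.range (n+1),
                  C * ((μ {ω | A ω = n}).toReal * ((n.choose k : ℝ) * (m - 1) ^ k))
                = C * ((μ {ω | A ω = n}).toReal *
                    ∑ k ∈ Finset.range (n+1), ((n.choose k : ℝ)) * (m - 1) ^ k) := by
                  rw [Finset.mul_sum, Finset.mul_sum]
              _ = C * ((μ {ω | A ω = n}).toReal * m ^ n) := by rw [hbin]
          rw [show (fun n => ∑' k, C * ((μ {ω | A ω = n}).toReal *
              ((n.choose k : ℝ) * (m - 1) ^ k))) = fun n =>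
              C * ((μ {ω | A ω = n}).toReal * m ^ n) from funext hval]
          exact hPsum
      exact ((Equiv.prodComm ℕ ℕ).summable_iff).mpr h1
    have hF2normsum : Summable (fun p : ℕ × ℕ => ∫ ω, ‖F2 p ω‖ ∂μ) :=
      Summable.of_nonneg_of_le (fun p => integral_nonneg fun ω => norm_nonneg _)
        (fun p => by simpa [Real.norm_eq_abs] using hF2abs p) hBsum
    have hF2intsum : Summable (fun p : ℕ × ℕ => ∫ ω, F2 p ω ∂μ) :=
      Summable.of_norm_bounded hF2normsum (fun p => by
        simpa [Real.norm_eq_abs] using norm_integral_le_integral_norm (μ := μ) (F2 p))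
    -- pointwise expansion
    have hptw : ∀ ω, σ (∑ j ∈ Finset.range (A ω), Y j ω) *
        Real.exp (η * ∑ j ∈ Finset.range (A ω),
          Y j ω * (if U j ω ≤ ξ then (1:ℝ) else 0)) = ∑' p : ℕ × ℕ, F2 p ω := by
      intro ω
      rw [tsum_eq_sum (s := (Finset.range (A ω + 1)) ×ˢ {A ω}) (f := fun p => F2 p ω)
        (fun p hp => ?_)]
      · rw [Finset.sum_product]
        simp only [Finset.sum_singleton]
        have hχN : χ (A ω) ω = 1 := by simp [hχdef]
        have hstep1 : ∑ k ∈ Finset.range (A ω + 1), F2 (k, A ω) ω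
            = ∑ S ∈ (Finset.range (A ω)).powerset,
                Φ (A ω) S ω * ∏ j ∈ S, (if U j ω ≤ ξ then (1:ℝ) else 0) := by
          rw [Finset.sum_powerset, Finset.card_range]
        rw [hstep1]
        have hstep2 : ∑ S ∈ (Finset.range (A ω)).powerset,
            Φ (A ω) S ω * ∏ j ∈ S, (if U j ω ≤ ξ then (1:ℝ) else 0)
            = σ (∑ j ∈ Finset.range (A ω), Y j ω) *
              ∏ j ∈ Finset.range (A ω),
                ((Real.exp (η * Y j ω) - 1) * (if U j ω ≤ ξ then (1:ℝ) else 0) + 1) := by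
          rw [Finset.prod_add]
          simp only [Finset.prod_const_one, mul_one]
          rw [Finset.mul_sum]
          refine Finset.sum_congr rfl fun S hS => ?_
          rw [hΦdef]
          dsimp only
          rw [hχN, one_mul, Finset.prod_mul_distrib]
          ring
        rw [hstep2]
        congr 1
        rw [Finset.mul_sum, Real.exp_sum]
        refine Finset.prod_congr rfl fun j _ => ?_
        by_cases h : U j ω ≤ ξ
        · simp [h]
        · simp [h]
      · rw [Finset.mem_product, Finset.mem_range, Finset.mem_singleton] at hp
        by_cases hn : p.2 = A ω
        · have hk : ¬ p.1 < A ω + 1 := fun hlt => hp ⟨hlt, hn⟩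
          rw [hF2def]
          dsimp only
          rw [hn, Finset.powersetCard_eq_empty.mpr (by simp only [Finset.card_range]; omega)]
          simp
        · rw [hF2def]
          dsimp only
          refine Finset.sum_eq_zero fun S _ => ?_
          rw [hΦdef]
          dsimp only
          have hn' : A ω ≠ p.2 := fun hh => hn hh.symm
          simp [hχdef, hn']
    have h0 : ∫ ω, σ (∑ j ∈ Finset.range (A ω), Y j ω) *
        Real.exp (η * ∑ j ∈ Finset.range (A ω),
          Y j ω * (if U j ω ≤ ξ then (1:ℝ) else 0)) ∂μ
        = ∫ ω, ∑' p : ℕ × ℕ, F2 p ω ∂μ :=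
      congrArg (fun g => ∫ ω, g ω ∂μ) (funext hptw)
    rw [h0, ← integral_tsum_of_summable_integral_norm hF2int hF2normsum]
    rw [Summable.tsum_prod' hF2intsum (fun k => hF2intsum.prod_factor k)]
    refine tsum_congr fun k => ?_
    calc ∑' n, ∫ ω, F2 (k, n) ω ∂μ
        = ∑' n, ξ ^ k * ∫ ω, Θ n k ω ∂μ := tsum_congr fun n => hF2val (k, n)
      _ = ξ ^ k * ∑' n, ∫ ω, Θ n k ω ∂μ := tsum_mul_left
      _ = (∫ ω, δ k ω * σ (∑ j ∈ Finset.range (A ω), Y j ω) ∂μ) * ξ ^ k := by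
          rw [← hck k]; ring
  refine ⟨key, ?_⟩
  -- uniform convergence via Weierstrass M-test
  have hδσint : ∀ k, Integrable (fun ω => δ k ω * σ (∑ j ∈ Finset.range (A ω), Y j ω)) μ := by
    intro k
    have h := Integrable.bdd_mul (hδint k) ((hσm.comp hZm).aestronglyMeasurable)
      (ae_of_all _ fun ω => by rw [Real.norm_eq_abs]; exact hC _)
    exact h.congr (ae_of_all _ fun ω => mul_comm _ _)
  have hcoef : ∀ k, |∫ ω, δ k ω * σ (∑ j ∈ Finset.range (A ω), Y j ω) ∂μ|
      ≤ C * ∫ ω, δ k ω ∂μ := by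
    intro k
    have h1 : ∀ ω, |δ k ω| * |σ (∑ j ∈ Finset.range (A ω), Y j ω)| ≤ C * δ k ω := by
      intro ω
      rw [abs_of_nonneg (hδ0 k ω)]
      calc δ k ω * |σ (∑ j ∈ Finset.range (A ω), Y j ω)| ≤ δ k ω * C :=
          mul_le_mul_of_nonneg_left (hC _) (hδ0 k ω)
        _ = C * δ k ω := mul_comm _ _
    have hIa : Integrable (fun ω => |δ k ω| * |σ (∑ j ∈ Finset.range (A ω), Y j ω)|) μ :=
      (hδσint k).abs.congr (ae_of_all _ fun ω => abs_mul _ _)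
    calc |∫ ω, δ k ω * σ (∑ j ∈ Finset.range (A ω), Y j ω) ∂μ|
        ≤ ∫ ω, |δ k ω| * |σ (∑ j ∈ Finset.range (A ω), Y j ω)| ∂μ := by
          simpa [Real.norm_eq_abs] using
            norm_integral_le_integral_norm
              (fun ω => δ k ω * σ (∑ j ∈ Finset.range (A ω), Y j ω)) (μ := μ)
      _ ≤ ∫ ω, C * δ k ω ∂μ := integral_mono hIa ((hδint k).const_mul C) h1
      _ = C * ∫ ω, δ k ω ∂μ := integral_const_mul _ _
  have huc := tendstoUniformlyOn_tsum_nat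
    (f := fun k ξ => (∫ ω, δ k ω * σ (∑ j ∈ Finset.range (A ω), Y j ω) ∂μ) * ξ ^ k)
    (u := fun k => C * ∫ ω, δ k ω ∂μ) (hδsummable.mul_left C)
    (s := Set.Icc (0:ℝ) 1) (fun k x hx => by
      rw [Real.norm_eq_abs, abs_mul, abs_pow]
      have hxle : |x| ≤ 1 := by
        rw [abs_of_nonneg hx.1]; exact hx.2
      calc |∫ ω, δ k ω * σ (∑ j ∈ Finset.range (A ω), Y j ω) ∂μ| * |x| ^ k
          ≤ (C * ∫ ω, δ k ω ∂μ) * 1 := by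
            refine mul_le_mul (hcoef k) (pow_le_one₀ (abs_nonneg _) hxle)
              (pow_nonneg (abs_nonneg _) k) ?_
            exact le_trans (abs_nonneg _) (hcoef k)
        _ = C * ∫ ω, δ k ω ∂μ := mul_one _)
  exact huc.congr_right (fun x hx => (key x hx).symm)
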